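/- Let M be a popular matching in a bipartite instance H with witness α ∈ {0,±1}^n. If u is an unstable vertex of H (i.e., unmatched in some, equivalently every, stable matching of H), then α_u = 0 if u is unmatched in M, and α_u = −1 if u is matched in M. -/

import Mathlib

open Finset

section Defs
variable {V : Type*}

/-- A matching given as a partial partner function: if `M u = some v` then
`(u,v)` is an edge and `v`'s partner is `u`. -/
def IsMatching (adj : V → V → Prop) (M : V → Option V) : Prop :=
  ∀ u v, M u = some v → adj u v ∧ M v = some u

/-- Vertex `u` prefers matching `M` to `M'`: matched in `M` and unmatched in `M'`,
or matched in both and prefers its `M`-partner. -/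
def PrefersM (pref : V → V → V → Bool) (M M' : V → Option V) (u : V) : Bool :=
  match M u, M' u with
  | some a, some b => pref u a b
  | some _, none => true
  | _, _ => false

/-- `phiM pref M M'` = number of vertices preferring `M` to `M'`. -/
def phiM [Fintype V] (pref : V → V → V → Bool) (M M' : V → Option V) : ℕ :=
  (Finset.univ.filter fun u => PrefersM pref M M' u = true).card

/-- `M` is popular: no matching is preferred by strictly more vertices. -/
def Popular [Fintype V] (adj : V → V → Prop) (pref : V → V → V → Bool)
    (M : V → Option V) : Prop :=
  ∀ M', IsMatching adj M' → phiM pref M' M ≤ phiM pref M M'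

/-- `a` prefers `b` to its assignment under `M` (being unmatched is worst). -/
def PrefOver (pref : V → V → V → Bool) (M : V → Option V) (a b : V) : Prop :=
  match M a with
  | none => True
  | some c => pref a b c = true

/-- `(a,b)` is a blocking edge with respect to `M`. -/
def Blocking (adj : V → V → Prop) (pref : V → V → V → Bool) (M : V → Option V)
    (a b : V) : Prop :=
  adj a b ∧ PrefOver pref M a b ∧ PrefOver pref M b a

/-- Number of matched vertices (twice the number of edges of `M`). -/
def msize [Fintype V] (M : V → Option V) : ℕ :=
  (Finset.univ.filter fun u => (M u).isSome = true).card

/-- `vote u v v'` where `u` itself encodes "unmatched"; every vertex regards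
itself as strictly worse than any neighbor. -/
def vote [DecidableEq V] (pref : V → V → V → Bool) (u v v' : V) : ℤ :=
  if v = v' then 0
  else if v' = u then 1
  else if v = u then -1
  else if pref u v v' then 1 else -1

/-- `wt_M(a,b) = vote_a(b, M̃(a)) + vote_b(a, M̃(b))`. -/
def wtEdge [DecidableEq V] (pref : V → V → V → Bool) (M : V → Option V) (a b : V) : ℤ :=
  vote pref a b ((M a).getD a) + vote pref b a ((M b).getD b)

/-- `wt_M(u,u)`: 0 if `u` is unmatched in `M`, else −1. -/
def wtSelf (M : V → Option V) (u : V) : ℤ :=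
  if (M u).isSome then -1 else 0

end Defs

/-!
A stable matching `S` never loses to `M`: along every edge of `M` the two endpoints cannot both
prefer their `M`-partners, since that edge would block `S`. Hence `∑ᵥ vote_v(S(v), M(v)) ≥ 0`.
On the other hand, the witness constraints along the edges and singletons of `S` bound twice this
sum by `2 ∑ α = 0`, so every such constraint is tight. At an `S`-unmatched vertex `u` the tight
constraint is `α_u = wt_M(u,u)`.
-/

section Vote

variable {V : Type*} {adj : V → V → Prop} {M S : V → Option V}

/-- The paper's `M̃(v)`: every unmatched vertex is matched to itself. -/
def partner (M : V → Option V) (v : V) : V :=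
  (M v).getD v

theorem IsMatching.ne (hM : IsMatching adj M) (hirr : ∀ v, ¬ adj v v) {v w : V}
    (h : M v = some w) : v ≠ w := by
  rintro rfl
  exact hirr v (hM v v h).1

theorem IsMatching.partner_involutive (hM : IsMatching adj M) :
    Function.Involutive (partner M) := by
  intro v
  cases h : M v with
  | none => simp [partner, h]
  | some w => simp [partner, h, (hM v w h).2]

theorem IsMatching.sum_comp_partner {β : Type*} [AddCommMonoid β] [Fintype V]
    (hM : IsMatching adj M) (f : V → β) : ∑ v, f (partner M v) = ∑ v, f v :=
  hM.partner_involutive.bijective.sum_comp f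

variable [DecidableEq V] (pref : V → V → V → Bool)

def matchingVote (S M : V → Option V) (v : V) : ℤ :=
  vote pref v (partner S v) (partner M v)

theorem matchingVote_add_eq_wtEdge (hS : IsMatching adj S) {v w : V} (h : S v = some w) :
    matchingVote pref S M v + matchingVote pref S M w = wtEdge pref M v w := by
  simp [matchingVote, wtEdge, partner, h, (hS v w h).2]

theorem matchingVote_eq_wtSelf (hM : IsMatching adj M) (hirr : ∀ v, ¬ adj v v) {v : V}
    (h : S v = none) : matchingVote pref S M v = wtSelf M v := by
  cases hMv : M v with
  | none => simp [matchingVote, partner, vote, wtSelf, h, hMv]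
  | some w =>
    have hvw := hM.ne hirr hMv
    simp [matchingVote, partner, vote, wtSelf, h, hMv, hvw, hvw.symm]

theorem matchingVote_nonneg (hS : IsMatching adj S) (hirr : ∀ v, ¬ adj v v) {v : V}
    (h : M v = none) : 0 ≤ matchingVote pref S M v := by
  cases hSv : S v with
  | none => simp [matchingVote, partner, vote, h, hSv]
  | some w =>
    have hvw := hS.ne hirr hSv
    simp [matchingVote, partner, vote, h, hSv, hvw.symm]

theorem matchingVote_eq_one_or_prefOver (hM : IsMatching adj M) (hS : IsMatching adj S)
    (hirr : ∀ v, ¬ adj v v)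
    (htot : ∀ u a b, adj u a → adj u b → a ≠ b → pref u a b = true ∨ pref u b a = true)
    {v w : V} (hMv : M v = some w) (hSv : S v ≠ some w) :
    matchingVote pref S M v = 1 ∨ (matchingVote pref S M v = -1 ∧ PrefOver pref S v w) := by
  have hvw := hM.ne hirr hMv
  cases hSv' : S v with
  | none =>
    exact Or.inr ⟨by simp [matchingVote, partner, vote, hSv', hMv, hvw, hvw.symm],
      by simp [PrefOver, hSv']⟩
  | some c =>
    have hcw : c ≠ w := fun h => hSv (h ▸ hSv')
    have hcv : c ≠ v := fun h => hS.ne hirr hSv' h.symm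
    by_cases hp : pref v c w = true
    · left
      simp [matchingVote, partner, vote, hSv', hMv, hcw, hcv, hvw.symm, hp]
    · have hpw : pref v w c = true :=
        (htot v w c (hM v w hMv).1 (hS v c hSv').1 hcw.symm).resolve_right hp
      right
      exact ⟨by simp [matchingVote, partner, vote, hSv', hMv, hcw, hcv, hvw.symm, hp],
        by simp [PrefOver, hSv', hpw]⟩

theorem matchingVote_add_nonneg_of_stable (hM : IsMatching adj M) (hS : IsMatching adj S)
    (hirr : ∀ v, ¬ adj v v)
    (htot : ∀ u a b, adj u a → adj u b → a ≠ b → pref u a b = true ∨ pref u b a = true)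
    (hstab : ∀ a b, ¬ Blocking adj pref S a b) {v w : V} (hMv : M v = some w) :
    0 ≤ matchingVote pref S M v + matchingVote pref S M w := by
  have hMw := (hM v w hMv).2
  by_cases hSv : S v = some w
  · simp [matchingVote, partner, vote, hSv, (hS v w hSv).2, hMv, hMw]
  · have hSw : S w ≠ some v := fun h => hSv (hS w v h).2
    rcases matchingVote_eq_one_or_prefOver pref hM hS hirr htot hMv hSv with hv | ⟨hv, hpv⟩ <;>
    rcases matchingVote_eq_one_or_prefOver pref hM hS hirr htot hMw hSw with hw | ⟨hw, hpw⟩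
    · omega
    · omega
    · omega
    · exact absurd ⟨(hM v w hMv).1, hpv, hpw⟩ (hstab v w)

theorem sum_matchingVote_nonneg_of_stable [Fintype V] (hM : IsMatching adj M)
    (hS : IsMatching adj S) (hirr : ∀ v, ¬ adj v v)
    (htot : ∀ u a b, adj u a → adj u b → a ≠ b → pref u a b = true ∨ pref u b a = true)
    (hstab : ∀ a b, ¬ Blocking adj pref S a b) :
    0 ≤ ∑ v, matchingVote pref S M v := by
  have hpairs : 0 ≤ ∑ v, (matchingVote pref S M v + matchingVote pref S M (partner M v)) := by
    refine Finset.sum_nonneg fun v _ => ?_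
    cases hMv : M v with
    | none =>
      simpa [partner, hMv, ← two_mul] using matchingVote_nonneg pref hS hirr hMv
    | some w =>
      simpa [partner, hMv] using matchingVote_add_nonneg_of_stable pref hM hS hirr htot hstab hMv
  rw [Finset.sum_add_distrib, hM.sum_comp_partner] at hpairs
  linarith

theorem matchingVote_add_le_witness {α : V → ℤ} (hM : IsMatching adj M) (hS : IsMatching adj S)
    (hirr : ∀ v, ¬ adj v v)
    (hedge : ∀ a b, adj a b → α a + α b ≥ wtEdge pref M a b) (hself : ∀ u, α u ≥ wtSelf M u)
    (v : V) :
    matchingVote pref S M v + matchingVote pref S M (partner S v) ≤ α v + α (partner S v) := by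
  cases hSv : S v with
  | none =>
    have := hself v
    simp only [partner, hSv, Option.getD_none, matchingVote_eq_wtSelf pref hM hirr hSv]
    linarith
  | some w =>
    have := hedge v w (hS v w hSv).1
    simp only [partner, hSv, Option.getD_some, matchingVote_add_eq_wtEdge pref hS hSv]
    linarith

theorem witness_eq_wtSelf_of_stable [Fintype V] {α : V → ℤ} (hM : IsMatching adj M) (hirr : ∀ v, ¬ adj v v)
    (htot : ∀ u a b, adj u a → adj u b → a ≠ b → pref u a b = true ∨ pref u b a = true)
    (hsum : ∑ u : V, α u = 0)
    (hedge : ∀ a b, adj a b → α a + α b ≥ wtEdge pref M a b) (hself : ∀ u, α u ≥ wtSelf M u)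
    (hS : IsMatching adj S) (hstab : ∀ a b, ¬ Blocking adj pref S a b) {u : V}
    (hu : S u = none) : α u = wtSelf M u := by
  have hle := matchingVote_add_le_witness pref hM hS hirr hedge hself
  have htight : ∑ v, (matchingVote pref S M v + matchingVote pref S M (partner S v)) =
      ∑ v, (α v + α (partner S v)) := by
    refine le_antisymm (Finset.sum_le_sum fun v _ => hle v) ?_
    rw [Finset.sum_add_distrib, Finset.sum_add_distrib, hS.sum_comp_partner,
      hS.sum_comp_partner, hsum]
    linarith [sum_matchingVote_nonneg_of_stable pref hM hS hirr htot hstab]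
  have hu' := (Finset.sum_eq_sum_iff_of_le fun v _ => hle v).mp htight u (Finset.mem_univ u)
  simp only [partner, hu, Option.getD_none, matchingVote_eq_wtSelf pref hM hirr hu] at hu'
  linarith

end Vote

theorem unstable_vertex_witness_general {V : Type*} [Fintype V] [DecidableEq V]
    (adj : V → V → Prop) (hadjirr : ∀ u, ¬ adj u u)
    (pref : V → V → V → Bool)
    (htot : ∀ u a b, adj u a → adj u b → a ≠ b → pref u a b = true ∨ pref u b a = true)
    (M : V → Option V) (hM : IsMatching adj M)
    (α : V → ℤ)
    (hsum : ∑ u : V, α u = 0)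
    (hedge : ∀ a b, adj a b → α a + α b ≥ wtEdge pref M a b)
    (hself : ∀ u, α u ≥ wtSelf M u)
    (u : V)
    (hunstable : ∃ S, IsMatching adj S ∧ (∀ a b, ¬ Blocking adj pref S a b) ∧ S u = none) :
    (M u = none → α u = 0) ∧ ((M u).isSome → α u = -1) := by
  obtain ⟨S, hS, hstab, hSu⟩ := hunstable
  have hu := witness_eq_wtSelf_of_stable pref hM hadjirr htot hsum hedge hself hS hstab hSu
  constructor <;> intro h <;> simp [hu, wtSelf, h]

/-- If `M` is a popular matching in a bipartite instance with an integral
witness `α ∈ {0,±1}^n` and `u` is an unstable vertex (unmatched in some stable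
matching), then `α_u = 0` if `u` is unmatched in `M` and `α_u = −1` otherwise. -/
theorem unstable_vertex_witness {V : Type*} [Fintype V] [DecidableEq V]
    (adj : V → V → Prop) (hsymm : ∀ u v, adj u v → adj v u) (hadjirr : ∀ u, ¬ adj u u)
    (side : V → Bool) (hbip : ∀ u v, adj u v → side u ≠ side v)
    (pref : V → V → V → Bool)
    (hpirr : ∀ u a, pref u a a = false)
    (hasym : ∀ u a b, pref u a b = true → pref u b a = false)
    (htrans : ∀ u a b c, pref u a b = true → pref u b c = true → pref u a c = true)
    (htot : ∀ u a b, adj u a → adj u b → a ≠ b → pref u a b = true ∨ pref u b a = true)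
    (M : V → Option V) (hM : IsMatching adj M) (hpop : Popular adj pref M)
    (α : V → ℤ) (hval : ∀ v, α v = 0 ∨ α v = 1 ∨ α v = -1)
    (hsum : ∑ u : V, α u = 0)
    (hedge : ∀ a b, adj a b → α a + α b ≥ wtEdge pref M a b)
    (hself : ∀ u, α u ≥ wtSelf M u)
    (u : V)
    (hunstable : ∃ S, IsMatching adj S ∧ (∀ a b, ¬ Blocking adj pref S a b) ∧ S u = none) :
    (M u = none → α u = 0) ∧ ((M u).isSome → α u = -1) :=
  unstable_vertex_witness_general adj hadjirr pref htot M hM α hsum hedge hself u hunstable
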